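/- arXiv:2503.11338 — 4 statements merged into one kernel-verified Lean document; each statement's English description precedes it below -/
import Mathlib

section
/- Consider a pullback square of categories in which the bottom functor f : D → C admits a fully faithful left adjoint f!. Then the projection functor q : D ×_C E → E (the pullback along g : E → C) admits a fully faithful left adjoint. In particular, the class of right Bousfield localizations (functors admitting a fully faithful left adjoint) is closed under pullback along arbitrary functors. -/
open CategoryTheory

universe v₁ v₂ v₃ u₁ u₂ u₃

variable {C : Type u₁} [Category.{v₁} C] {D : Type u₂} [Category.{v₂} D]
  {E : Type u₃} [Category.{v₃} E]

/-- The (iso-comma) pullback `D ×_C E` of a cospan of categories `f : D ⥤ C ⟵ E : g`. -/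
structure CatPullback (f : D ⥤ C) (g : E ⥤ C) where
  left : D
  right : E
  iso : f.obj left ≅ g.obj right

/-- Morphisms in the pullback of categories. -/
@[ext]
structure CatPullbackHom {f : D ⥤ C} {g : E ⥤ C} (X Y : CatPullback f g) where
  l : X.left ⟶ Y.left
  r : X.right ⟶ Y.right
  w : f.map l ≫ Y.iso.hom = X.iso.hom ≫ g.map r

instance (f : D ⥤ C) (g : E ⥤ C) : Category (CatPullback f g) where
  Hom X Y := CatPullbackHom X Y
  id X := ⟨𝟙 _, 𝟙 _, by simp⟩
  comp {X Y Z} φ ψ := ⟨φ.l ≫ ψ.l, φ.r ≫ ψ.r, by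
    rw [Functor.map_comp, Functor.map_comp, Category.assoc, ψ.w, ← Category.assoc, φ.w,
      Category.assoc]⟩
  id_comp φ := by apply CatPullbackHom.ext <;> simp
  comp_id φ := by apply CatPullbackHom.ext <;> simp
  assoc φ ψ χ := by apply CatPullbackHom.ext <;> simp

/-- The projection `D ×_C E ⥤ E`. -/
def catPullbackSnd (f : D ⥤ C) (g : E ⥤ C) : CatPullback f g ⥤ E where
  obj X := X.right
  map φ := φ.r

/-!
Send `e : E` to `(f!(g e), e, η⁻¹)`, where `η : g e ≅ f(f!(g e))` is the unit of `f! ⊣ f`,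
invertible because `f!` is fully faithful. A morphism from this object to `(d, e', φ)` is
a pair `(l, r)` whose compatibility condition says exactly that `l` is the adjoint
transpose of `g r ≫ φ⁻¹`, so such morphisms correspond to their second components
`r : e ⟶ e'`. This makes the construction left adjoint to the projection with identity
unit, hence fully faithful.
-/

namespace CatPullback

lemma hom_w_iff {f : D ⥤ C} {g : E ⥤ C} {X Y : CatPullback f g}
    (l : X.left ⟶ Y.left) (r : X.right ⟶ Y.right) :
    f.map l ≫ Y.iso.hom = X.iso.hom ≫ g.map r ↔ X.iso.inv ≫ f.map l = g.map r ≫ Y.iso.inv := by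
  rw [← Iso.inv_comp_eq, ← Category.assoc, Iso.eq_comp_inv]

section LeftAdjoint

variable {f : D ⥤ C} {f' : C ⥤ D} (g : E ⥤ C) (adj : f' ⊣ f) [IsIso adj.unit]

noncomputable def sndLeftAdjointObj (e : E) : CatPullback f g :=
  ⟨f'.obj (g.obj e), e, (asIso (adj.unit.app (g.obj e))).symm⟩

lemma sndLeftAdjointObj_hom_w_iff {e : E} {X : CatPullback f g}
    (l : f'.obj (g.obj e) ⟶ X.left) (r : e ⟶ X.right) :
    f.map l ≫ X.iso.hom = (sndLeftAdjointObj g adj e).iso.hom ≫ g.map r ↔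
      adj.homEquiv _ _ l = g.map r ≫ X.iso.inv :=
  hom_w_iff (X := sndLeftAdjointObj g adj e) l r

noncomputable def sndLeftAdjointHomEquiv (e : E) (X : CatPullback f g) :
    (sndLeftAdjointObj g adj e ⟶ X) ≃ (e ⟶ X.right) where
  toFun φ := φ.r
  invFun r := ⟨(adj.homEquiv _ _).symm (g.map r ≫ X.iso.inv), r,
    (sndLeftAdjointObj_hom_w_iff g adj _ r).2 (Equiv.apply_symm_apply _ _)⟩
  left_inv φ := CatPullbackHom.ext
    ((Equiv.symm_apply_eq _).2 ((sndLeftAdjointObj_hom_w_iff g adj φ.l φ.r).1 φ.w).symm) rfl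
  right_inv _ := rfl

noncomputable def sndLeftAdjoint : E ⥤ CatPullback f g :=
  Adjunction.leftAdjointOfEquiv (G := catPullbackSnd f g) (sndLeftAdjointHomEquiv g adj)
    (fun _ _ _ _ _ => rfl)

noncomputable def sndAdjunction : sndLeftAdjoint g adj ⊣ catPullbackSnd f g :=
  Adjunction.adjunctionOfEquivLeft _ _

instance : IsIso (sndAdjunction g adj).unit :=
  have (e : E) : IsIso ((sndAdjunction g adj).unit.app e) := inferInstanceAs (IsIso (𝟙 e))
  NatIso.isIso_of_isIso_app _

end LeftAdjoint

end CatPullback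

open CatPullback in
/-- If `f : D ⥤ C` admits a fully faithful left adjoint, then so does the pullback
projection `q : D ×_C E ⥤ E`, for any `g : E ⥤ C`: right Bousfield localizations are
closed under pullback. -/
theorem catPullback_rightBousfield (f : D ⥤ C) (g : E ⥤ C)
    (f' : C ⥤ D) (adj : f' ⊣ f) (hfull : f'.Full) (hfaithful : f'.Faithful) :
    ∃ h : E ⥤ CatPullback f g,
      Nonempty (h ⊣ catPullbackSnd f g) ∧ h.Full ∧ h.Faithful := by
  have hff := (sndAdjunction g adj).fullyFaithfulLOfIsIsoUnit
  exact ⟨_, ⟨sndAdjunction g adj⟩, hff.full, hff.faithful⟩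
end

section
/- Dually, if f : D → C admits a fully faithful right adjoint, then the pullback projection q : D ×_C E → E admits a fully faithful right adjoint, for any functor g : E → C. -/
/-!
Since `f'` is fully faithful, the counit `ε : f' ⋙ f ⟶ 𝟭 C` is invertible, so
`e ↦ (f' (g e), e, ε_{g e})` is a section of the projection `q`. A morphism from `(d, e₀, α)`
into this section is determined by its `E`-component `r`: its `D`-component is forced to be the
adjoint transpose of `α ≫ g r`. Hence the section is right adjoint to `q` with identity counit,
and is therefore fully faithful.
-/

open CategoryTheory

universe v₁ v₂ v₃ u₁ u₂ u₃

variable {C : Type u₁} [Category.{v₁} C] {D : Type u₂} [Category.{v₂} D]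
  {E : Type u₃} [Category.{v₃} E]

namespace CatPullback

variable {f : D ⥤ C} {g : E ⥤ C}

@[ext]
lemma hom_ext {X Y : CatPullback f g} {φ ψ : X ⟶ Y} (hl : φ.l = ψ.l) (hr : φ.r = ψ.r) :
    φ = ψ :=
  CatPullbackHom.ext hl hr

end CatPullback

section

variable {f : D ⥤ C} {f' : C ⥤ D} (adj : f ⊣ f') [IsIso adj.counit]

noncomputable def catPullbackSection (g : E ⥤ C) : E ⥤ CatPullback f g where
  obj e := ⟨f'.obj (g.obj e), e, asIso (adj.counit.app (g.obj e))⟩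
  map φ := ⟨f'.map (g.map φ), φ, by simp⟩

variable {g : E ⥤ C}

noncomputable def catPullbackSectionHomEquiv (X : CatPullback f g) (e : E) :
    (X.right ⟶ e) ≃ (X ⟶ (catPullbackSection adj g).obj e) where
  toFun r := ⟨adj.unit.app X.left ≫ f'.map (X.iso.hom ≫ g.map r), r,
    (adj.eq_unit_comp_map_iff _ _).1 rfl⟩
  invFun φ := φ.r
  left_inv _ := rfl
  right_inv φ := by
    ext
    · exact ((adj.eq_unit_comp_map_iff _ _).2 φ.w).symm
    · rfl

lemma catPullbackSectionHomEquiv_comp {X : CatPullback f g} {e e' : E} (r : X.right ⟶ e)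
    (ψ : e ⟶ e') :
    catPullbackSectionHomEquiv adj X e' (r ≫ ψ) =
      catPullbackSectionHomEquiv adj X e r ≫ (catPullbackSection adj g).map ψ := by
  ext
  -- `simp` does not see through the objects `((catPullbackSection adj g).obj _).left`
  · show adj.unit.app X.left ≫ f'.map (X.iso.hom ≫ g.map (r ≫ ψ)) =
      (adj.unit.app X.left ≫ f'.map (X.iso.hom ≫ g.map r)) ≫ f'.map (g.map ψ)
    simp
  · rfl

variable (g) in
noncomputable def catPullbackSndAdjunction : catPullbackSnd f g ⊣ catPullbackSection adj g :=
  Adjunction.mkOfHomEquiv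
    { homEquiv := catPullbackSectionHomEquiv adj
      homEquiv_naturality_left_symm _ _ := rfl
      homEquiv_naturality_right := catPullbackSectionHomEquiv_comp adj }

instance : IsIso (catPullbackSndAdjunction adj g).counit :=
  have (e : E) : IsIso ((catPullbackSndAdjunction adj g).counit.app e) := IsIso.id e
  NatIso.isIso_of_isIso_app _

end

/-- If `f : D ⥤ C` admits a fully faithful right adjoint, then so does the pullback
projection `q : D ×_C E ⥤ E`, for any `g : E ⥤ C`: left Bousfield localizations are
closed under pullback. -/
theorem catPullback_leftBousfield (f : D ⥤ C) (g : E ⥤ C)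
    (f' : C ⥤ D) (adj : f ⊣ f') (hfull : f'.Full) (hfaithful : f'.Faithful) :
    ∃ h : E ⥤ CatPullback f g,
      Nonempty (catPullbackSnd f g ⊣ h) ∧ h.Full ∧ h.Faithful := by
  have hff := (catPullbackSndAdjunction adj g).fullyFaithfulROfIsIsoCounit
  exact ⟨catPullbackSection adj g, ⟨catPullbackSndAdjunction adj g⟩, hff.full, hff.faithful⟩
end

section
/- Let D be a category with filtered colimits, κ a regular uncountable cardinal, and d a κ-compact object of D. Let J be a κ-filtered category admitting colimits of countable chains, and d• : J → D a diagram of κ-compact objects which preserves countable chain colimits and has colimit d. Then there exists j ∈ J with d_j ≅ d. (Key combinatorial content: construct a countable chain j₀ ≤ j₁ ≤ ... in J such that each transition map d_{j_n} → d_{j_{n+1}} factors through d compatibly, and conclude colim_n d_{j_n} ≅ d.) -/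
open CategoryTheory Limits Cardinal

universe v u

/-- A category is `κ`-filtered if every `κ`-small diagram in it admits a cocone. -/
def IsCardinalFiltered (J : Type v) [Category.{v} J] (κ : Cardinal.{v}) : Prop :=
  ∀ (A : Type v) [SmallCategory A], #(Σ (a : A) (b : A), a ⟶ b) < κ →
    ∀ F : A ⥤ J, Nonempty (Cocone F)

/-- An object `d` is `κ`-compact if `Hom(d, −)` preserves `κ`-filtered colimits,
expressed elementarily. -/
def IsCardinalCompact {D : Type u} [Category.{v} D] (κ : Cardinal.{v}) (d : D) : Prop :=
  ∀ (J : Type v) [SmallCategory J], IsCardinalFiltered J κ →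
    ∀ (G : J ⥤ D) (c : Cocone G), Nonempty (IsColimit c) →
      (∀ φ : d ⟶ c.pt, ∃ (j : J) (ψ : d ⟶ G.obj j), ψ ≫ c.ι.app j = φ) ∧
      (∀ (j : J) (ψ ψ' : d ⟶ G.obj j), ψ ≫ c.ι.app j = ψ' ≫ c.ι.app j →
        ∃ (k : J) (h : j ⟶ k), ψ ≫ G.map h = ψ' ≫ G.map h)

/-!
Compactness of `d = colim F` splits `d` off some stage: `d → F j → d` is the identity. The
idempotent `F j → d → F j` agrees with the identity after composing to `d`, so by compactness
of `F j` the two become equal at a later stage `k`, where the pushed-forward section again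
splits `d`. Iterating gives a chain in `J` along which every transition map factors through
`d`; its colimit `j` has `F j = colim F(jₙ)`, and the factorisations assemble into inverse
isomorphisms `F j ≅ d`.
-/

namespace CategoryTheory.Limits

variable {C : Type*} [Category C] {X : ℕ ⥤ C} (t : Cocone X) (q : ∀ n, t.pt ⟶ X.obj n)

lemma sections_comp_ι_eq {s : Cocone X} (hq : ∀ n, q n ≫ t.ι.app n = 𝟙 t.pt)
    (hιq : ∀ n, t.ι.app n ≫ q (n + 1) = X.map (homOfLE n.le_succ)) (n : ℕ) :
    q n ≫ s.ι.app n = q 0 ≫ s.ι.app 0 := by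
  induction n with
  | zero => rfl
  | succ n ih =>
    rw [← ih, ← s.w (homOfLE n.le_succ), ← hιq, ← Category.assoc, ← Category.assoc, hq,
      Category.id_comp]

def IsColimit.coconePointIsoOfSections {s : Cocone X} (hs : IsColimit s)
    (hq : ∀ n, q n ≫ t.ι.app n = 𝟙 t.pt)
    (hιq : ∀ n, t.ι.app n ≫ q (n + 1) = X.map (homOfLE n.le_succ)) :
    s.pt ≅ t.pt where
  hom := hs.desc t
  inv := q 0 ≫ s.ι.app 0
  hom_inv_id := hs.hom_ext fun n => by
    rw [hs.fac_assoc, ← sections_comp_ι_eq t q hq hιq (n + 1), ← Category.assoc, hιq, s.w,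
      Category.comp_id]
  inv_hom_id := by rw [Category.assoc, hs.fac, hq]

end CategoryTheory.Limits

section

variable {J : Type v} [SmallCategory J] {D : Type u} [Category.{v} D] {F : J ⥤ D}

structure SplitStage (c : Cocone F) where
  j : J
  sec : c.pt ⟶ F.obj j
  sec_ι : sec ≫ c.ι.app j = 𝟙 c.pt

variable {κ : Cardinal.{v}} {c : Cocone F}

lemma IsCardinalCompact.nonempty_splitStage (hd : IsCardinalCompact κ c.pt)
    (hJ : IsCardinalFiltered J κ) (hc : IsColimit c) : Nonempty (SplitStage c) :=
  let ⟨j, sec, sec_ι⟩ := (hd J hJ F c ⟨hc⟩).1 (𝟙 c.pt)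
  ⟨⟨j, sec, sec_ι⟩⟩

namespace SplitStage

lemma exists_ι_sec_map_eq_map (s : SplitStage c) (hs : IsCardinalCompact κ (F.obj s.j))
    (hJ : IsCardinalFiltered J κ) (hc : IsColimit c) :
    ∃ (k : J) (t : s.j ⟶ k), c.ι.app s.j ≫ s.sec ≫ F.map t = F.map t := by
  have hidem : (c.ι.app s.j ≫ s.sec) ≫ c.ι.app s.j = 𝟙 (F.obj s.j) ≫ c.ι.app s.j := by
    simp [s.sec_ι]
  obtain ⟨k, t, ht⟩ := (hs J hJ F c ⟨hc⟩).2 s.j _ _ hidem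
  exact ⟨k, t, by simpa using ht⟩

def push (s : SplitStage c) {k : J} (t : s.j ⟶ k) : SplitStage c where
  j := k
  sec := s.sec ≫ F.map t
  sec_ι := by rw [Category.assoc, c.w t, s.sec_ι]

lemma exists_chain (s₀ : SplitStage c)
    (hstep : ∀ s : SplitStage c,
      ∃ (k : J) (t : s.j ⟶ k), c.ι.app s.j ≫ s.sec ≫ F.map t = F.map t) :
    ∃ (G : ℕ ⥤ J) (q : ∀ n, c.pt ⟶ F.obj (G.obj n)),
      (∀ n, q n ≫ c.ι.app (G.obj n) = 𝟙 c.pt) ∧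
      ∀ n, c.ι.app (G.obj n) ≫ q (n + 1) = F.map (G.map (homOfLE n.le_succ)) := by
  choose k t ht using hstep
  let stage : ℕ → SplitStage c := fun n => Nat.rec s₀ (fun _ s => s.push (t s)) n
  refine ⟨Functor.ofSequence (X := fun n => (stage n).j) fun n => t (stage n),
    fun n => (stage n).sec, fun n => (stage n).sec_ι, fun n => ?_⟩
  erw [Functor.ofSequence_map_homOfLE_succ]
  exact ht (stage n)

end SplitStage

end

theorem exists_stage_iso_of_kappa_compact_colimit_general
    {D : Type u} [Category.{v} D] {κ : Cardinal.{v}}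
    (J : Type v) [SmallCategory J] (hJ : IsCardinalFiltered J κ)
    [HasColimitsOfShape ℕ J]
    (F : J ⥤ D) (hcpt : ∀ j : J, IsCardinalCompact κ (F.obj j))
    [PreservesColimitsOfShape ℕ F]
    (c : Cocone F) (hc : IsColimit c) (hd : IsCardinalCompact κ c.pt) :
    ∃ j : J, Nonempty (F.obj j ≅ c.pt) := by
  obtain ⟨s₀⟩ := hd.nonempty_splitStage hJ hc
  obtain ⟨G, q, hq, hιq⟩ :=
    s₀.exists_chain fun s => s.exists_ι_sec_map_eq_map (hcpt s.j) hJ hc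
  exact ⟨colimit G, ⟨(isColimitOfPreserves F (colimit.isColimit G)).coconePointIsoOfSections
    (c.whisker G) q hq hιq⟩⟩

/-- If a `κ`-compact object `d` is the colimit of a `κ`-filtered diagram of `κ`-compact
objects which preserves colimits of countable chains (indexed by a category with colimits of
countable chains), then `d` is isomorphic to one of the stages. -/
theorem exists_stage_iso_of_kappa_compact_colimit
    {D : Type u} [Category.{v} D] {κ : Cardinal.{v}}
    (hreg : κ.IsRegular) (huncount : ℵ₀ < κ)
    (J : Type v) [SmallCategory J] (hJ : IsCardinalFiltered J κ)
    [HasColimitsOfShape ℕ J]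
    (F : J ⥤ D) (hcpt : ∀ j : J, IsCardinalCompact κ (F.obj j))
    [PreservesColimitsOfShape ℕ F]
    (c : Cocone F) (hc : IsColimit c) (hd : IsCardinalCompact κ c.pt) :
    ∃ j : J, Nonempty (F.obj j ≅ c.pt) :=
  exists_stage_iso_of_kappa_compact_colimit_general J hJ F hcpt c hc hd
end

section
/- Let R be a ring and let X : (ℤ, ≤) → Mod R be a functor which is a compact object of the functor category Fun((ℤ, ≤), Mod R). Then X is a retract of a functor Y : (ℤ, ≤) → Mod R such that Y(i) = 0 for all sufficiently small i and the map Y(i) → Y(i+1) is an isomorphism for all sufficiently large i. -/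
open CategoryTheory Limits

universe u

/-- An object `X` of a category `D` is compact if `Hom(X, −)` preserves filtered colimits,
expressed elementarily. -/
def IsCompactObj {D : Type (u + 1)} [Category.{u} D] (X : D) : Prop :=
  ∀ (J : Type u) [SmallCategory J] [IsFiltered J],
    ∀ (G : J ⥤ D) (c : Cocone G), Nonempty (IsColimit c) →
      (∀ φ : X ⟶ c.pt, ∃ (j : J) (ψ : X ⟶ G.obj j), ψ ≫ c.ι.app j = φ) ∧
      (∀ (j : J) (ψ ψ' : X ⟶ G.obj j), ψ ≫ c.ι.app j = ψ' ≫ c.ι.app j →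
        ∃ (k : J) (h : j ⟶ k), ψ ≫ G.map h = ψ' ≫ G.map h)

/-- The index type for the chain of truncations: a copy of `ℕ` in universe `u`,
with its usual order, regarded as a filtered category. -/
def Idx : Type u := ULift.{u} ℕ

instance : SemilatticeSup Idx := inferInstanceAs (SemilatticeSup (ULift.{u} ℕ))

instance : Nonempty Idx := ⟨(ULift.up 0 : Idx)⟩

/-- Build an element of `Idx` from a natural number. -/
def Idx.mk (n : ℕ) : Idx := ULift.up n

/-- The natural number underlying an element of `Idx`. -/
def Idx.down (x : Idx) : ℕ := ULift.down x

lemma Idx.le_down {n m : Idx} (h : n ≤ m) : n.down ≤ m.down := h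

namespace CompactTrunc

variable {R : Type u} [Ring R] (X : ℤ ⥤ ModuleCat.{u} R)

/-- Elementwise collapsing of transition maps. -/
lemma map_map {a b c : ℤ} (hab : a ≤ b) (hbc : b ≤ c) (x : X.obj a) :
    X.map (homOfLE hbc) (X.map (homOfLE hab) x) = X.map (homOfLE (hab.trans hbc)) x := by
  change (X.map (homOfLE hab) ≫ X.map (homOfLE hbc)) x = _
  rw [← X.map_comp, homOfLE_comp]

lemma map_self {a : ℤ} (h : a ≤ a) (x : X.obj a) : X.map (homOfLE h) x = x := by
  rw [show homOfLE h = 𝟙 a from rfl, X.map_id]; rfl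

/-- The submodule of `X (min i n)` used for the `n`-th truncation in degree `i`. -/
def S (n : ℕ) (i : ℤ) : Submodule R (X.obj (min i (n : ℤ))) :=
  if -(n : ℤ) ≤ i then ⊤ else ⊥

/-- Coerce an element of a truncation piece to the ambient module. -/
def amb {n : ℕ} {i : ℤ} (x : (ModuleCat.of R (S X n i) : Type u)) :
    X.obj (min i (n : ℤ)) :=
  Subtype.val x

lemma mem_S_map {n m : ℕ} {i j : ℤ} (hnm : n ≤ m) (hij : i ≤ j)
    {x : X.obj (min i (n : ℤ))} (hx : x ∈ S X n i) :
    X.map (homOfLE (min_le_min hij (Int.ofNat_le.mpr hnm))) x ∈ S X m j := by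
  by_cases h : -(m : ℤ) ≤ j
  · simp [S, h]
  · have hi : ¬ (-(n : ℤ) ≤ i) := by
      have : (n : ℤ) ≤ m := Int.ofNat_le.mpr hnm
      omega
    rw [S, if_neg hi] at hx
    rw [Submodule.mem_bot] at hx
    subst hx
    simp [S, h]

/-- Transition maps between truncation pieces. -/
noncomputable def φ {n m : ℕ} {i j : ℤ} (hnm : n ≤ m) (hij : i ≤ j) :
    ModuleCat.of R (S X n i) ⟶ ModuleCat.of R (S X m j) :=
  ModuleCat.ofHom ((X.map (homOfLE (min_le_min hij (Int.ofNat_le.mpr hnm)))).hom.restrict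
    (fun _ hx => mem_S_map X hnm hij hx))

lemma φ_comp {n m l : ℕ} {i j k : ℤ} (hnm : n ≤ m) (hml : m ≤ l)
    (hij : i ≤ j) (hjk : j ≤ k) :
    φ X hnm hij ≫ φ X hml hjk = φ X (hnm.trans hml) (hij.trans hjk) := by
  ext x
  show X.map (homOfLE (min_le_min hjk (Int.ofNat_le.mpr hml)))
      (X.map (homOfLE (min_le_min hij (Int.ofNat_le.mpr hnm))) (amb X x)) =
    X.map (homOfLE (min_le_min (hij.trans hjk) (Int.ofNat_le.mpr (hnm.trans hml))))
      (amb X x)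
  rw [map_map]

lemma φ_self {n : ℕ} {i : ℤ} (h : n ≤ n) (h' : i ≤ i) :
    φ X h h' = 𝟙 (ModuleCat.of R (S X n i)) := by
  ext x
  show X.map (homOfLE (min_le_min h' (Int.ofNat_le.mpr h))) (amb X x) = amb X x
  rw [map_self]

/-- The `n`-th truncation functor. -/
noncomputable def Yf (n : ℕ) : ℤ ⥤ ModuleCat.{u} R where
  obj i := ModuleCat.of R (S X n i)
  map {i j} f := φ X le_rfl (leOfHom f)
  map_id i := φ_self X le_rfl le_rfl
  map_comp {i j k} f g := by rw [φ_comp]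

/-- The chain of truncations, indexed by `Idx`. -/
noncomputable def chain : Idx.{u} ⥤ (ℤ ⥤ ModuleCat.{u} R) where
  obj n := Yf X n.down
  map {n m} f :=
    { app := fun i => φ X (Idx.le_down (leOfHom f)) le_rfl
      naturality := fun i j g => by
        show φ X le_rfl (leOfHom g) ≫ φ X (Idx.le_down (leOfHom f)) le_rfl =
          φ X (Idx.le_down (leOfHom f)) le_rfl ≫ φ X le_rfl (leOfHom g)
        rw [φ_comp, φ_comp] }
  map_id n := by
    apply NatTrans.ext
    funext i
    exact φ_self X le_rfl le_rfl
  map_comp {n m l} f g := by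
    apply NatTrans.ext
    funext i
    show φ X (Idx.le_down (leOfHom (f ≫ g))) le_rfl =
      φ X (Idx.le_down (leOfHom f)) le_rfl ≫
        φ X (Idx.le_down (leOfHom g)) le_rfl
    rw [φ_comp]

/-- The cocone component maps. -/
noncomputable def ι' (n : ℕ) (i : ℤ) : ModuleCat.of R (S X n i) ⟶ X.obj i :=
  ModuleCat.ofHom ((X.map (homOfLE (min_le_left i (n : ℤ)))).hom.comp (S X n i).subtype)

lemma φ_ι' {n m : ℕ} (hnm : n ≤ m) (i : ℤ) :
    φ X hnm (le_refl i) ≫ ι' X m i = ι' X n i := by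
  ext x
  show X.map (homOfLE (min_le_left i (m : ℤ)))
      (X.map (homOfLE (min_le_min (le_refl i) (Int.ofNat_le.mpr hnm))) (amb X x)) =
    X.map (homOfLE (min_le_left i (n : ℤ))) (amb X x)
  rw [map_map]

/-- The cocone over the chain of truncations with point `X`. -/
noncomputable def cc : Cocone (chain X) where
  pt := X
  ι :=
    { app := fun n =>
        { app := fun i => ι' X n.down i
          naturality := fun i j g => by
            ext x
            show X.map (homOfLE (min_le_left j (n.down : ℤ)))
                (X.map (homOfLE (min_le_min (leOfHom g)
                  (Int.ofNat_le.mpr (le_refl n.down)))) (amb X x)) =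
              X.map (homOfLE (leOfHom g))
                (X.map (homOfLE (min_le_left i (n.down : ℤ))) (amb X x))
            rw [map_map, map_map] }
      naturality := fun n m f => by
        apply NatTrans.ext
        funext i
        ext x
        show X.map (homOfLE (min_le_left i (m.down : ℤ)))
            (X.map (homOfLE (min_le_min (le_refl i)
              (Int.ofNat_le.mpr (Idx.le_down (leOfHom f))))) (amb X x)) =
          X.map (homOfLE (min_le_left i (n.down : ℤ))) (amb X x)
        rw [map_map] }

lemma isIso_ι' (n : ℕ) (i : ℤ) (h1 : -(n : ℤ) ≤ i) (h2 : i ≤ (n : ℤ)) :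
    IsIso (ι' X n i) := by
  refine ⟨ModuleCat.ofHom (LinearMap.codRestrict (S X n i)
      (X.map (homOfLE (le_min le_rfl h2))).hom (fun c => by simp [S, h1])), ?_, ?_⟩
  · ext x
    show X.map (homOfLE (le_min le_rfl h2))
        (X.map (homOfLE (min_le_left i (n : ℤ))) (amb X x)) = amb X x
    rw [map_map, map_self]
  · ext x
    show X.map (homOfLE (min_le_left i (n : ℤ)))
        (X.map (homOfLE (le_min le_rfl h2)) x) = x
    rw [map_map, map_self]

/-- The evaluated cocone at each degree is a colimit. -/
noncomputable def ptIsColimit (i : ℤ) :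
    IsColimit (((evaluation ℤ (ModuleCat.{u} R)).obj i).mapCocone (cc X)) := by
  set N : ℕ := i.natAbs with hN
  have h1 : -(N : ℤ) ≤ i := by omega
  have h2 : i ≤ (N : ℤ) := by omega
  have : IsIso (ι' X N i) := isIso_ι' X N i h1 h2
  refine
    { desc := fun s => @inv _ _ _ _ (ι' X N i) this ≫ s.ι.app (Idx.mk N)
      fac := fun s n => ?_
      uniq := fun s f hf => ?_ }
  · set m : Idx.{u} := Idx.mk (max n.down N) with hm
    have hNm : N ≤ m.down := le_max_right _ _
    have hnm : n.down ≤ m.down := le_max_left _ _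
    have hm1 : -(m.down : ℤ) ≤ i := by
      have : (N : ℤ) ≤ (m.down : ℤ) := Int.ofNat_le.mpr hNm
      omega
    have hm2 : i ≤ (m.down : ℤ) := by
      have : (N : ℤ) ≤ (m.down : ℤ) := Int.ofNat_le.mpr hNm
      omega
    have : IsIso (ι' X m.down i) := isIso_ι' X m.down i hm1 hm2
    have e3 : φ X hNm (le_refl i) ≫ s.ι.app m = s.ι.app (Idx.mk N) :=
      s.w (homOfLE (show Idx.mk N ≤ m from hNm))
    have e4 : φ X hnm (le_refl i) ≫ s.ι.app m = s.ι.app n :=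
      s.w (homOfLE (show n ≤ m from hnm))
    have key : inv (ι' X N i) ≫ s.ι.app (Idx.mk N) = inv (ι' X m.down i) ≫ s.ι.app m := by
      erw [← e3, ← Category.assoc]
      congr 1
      rw [IsIso.inv_comp_eq, IsIso.eq_comp_inv, φ_ι']
    show ι' X n.down i ≫ inv (ι' X N i) ≫ s.ι.app (Idx.mk N) = s.ι.app n
    erw [key, ← φ_ι' X hnm i, Category.assoc, IsIso.hom_inv_id_assoc, e4]
  · show f = inv (ι' X N i) ≫ s.ι.app (Idx.mk N)
    have happ : (((evaluation ℤ (ModuleCat.{u} R)).obj i).mapCocone (cc X)).ι.app (Idx.mk N) =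
        ι' X N i := rfl
    erw [← hf (Idx.mk N), happ, ← Category.assoc, IsIso.inv_hom_id, Category.id_comp]

/-- The cocone of truncations is a colimit. -/
noncomputable def isColim : IsColimit (cc X) :=
  evaluationJointlyReflectsColimits _ (fun i => ptIsColimit X i)

end CompactTrunc

open CompactTrunc in
/-- A compact object `X` of the category of `ℤ`-indexed filtered `R`-modules is a retract
of a functor `Y` which vanishes in sufficiently small degrees and whose transition maps are
isomorphisms in sufficiently large degrees. -/
theorem compact_filtered_module_is_retract_of_truncation
    {R : Type u} [Ring R] (X : ℤ ⥤ ModuleCat.{u} R)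
    (hX : IsCompactObj (D := ℤ ⥤ ModuleCat.{u} R) X) :
    ∃ (Y : ℤ ⥤ ModuleCat.{u} R) (i : X ⟶ Y) (p : Y ⟶ X),
      i ≫ p = 𝟙 X ∧
      (∃ a : ℤ, ∀ k : ℤ, k < a → IsZero (Y.obj k)) ∧
      (∃ b : ℤ, ∀ k : ℤ, b ≤ k → IsIso (Y.map (homOfLE (by omega : k ≤ k + 1)))) := by
  obtain ⟨j, ψ, hψ⟩ := (hX Idx.{u} (chain X) (cc X) ⟨isColim X⟩).1 (𝟙 X)
  refine ⟨Yf X j.down, ψ, (cc X).ι.app j, hψ, ⟨-(j.down : ℤ), ?_⟩, ⟨(j.down : ℤ), ?_⟩⟩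
  · intro k hk
    have hS : S X j.down k = ⊥ := if_neg (by omega)
    haveI hsub : Subsingleton ((ModuleCat.of R (S X j.down k) : Type u)) := by
      constructor
      rintro ⟨a, ha⟩ ⟨b, hb⟩
      rw [hS, Submodule.mem_bot] at ha hb
      subst ha; subst hb; rfl
    exact ModuleCat.isZero_of_subsingleton (ModuleCat.of R (S X j.down k))
  · intro k hk
    show IsIso (φ X (le_refl j.down) (by omega : k ≤ k + 1))
    have h1 : -(j.down : ℤ) ≤ k := by omega
    have hm : min (k + 1) (j.down : ℤ) ≤ min k (j.down : ℤ) := by omega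
    refine ⟨ModuleCat.ofHom ((X.map (homOfLE hm)).hom.restrict
      (p := S X j.down (k + 1)) (q := S X j.down k) (fun x hx => by simp [S, h1])), ?_, ?_⟩
    · ext x
      show X.map (homOfLE hm)
          (X.map (homOfLE (min_le_min (by omega : k ≤ k + 1)
            (Int.ofNat_le.mpr (le_refl j.down)))) (amb X x)) = amb X x
      rw [map_map, map_self]
    · ext x
      show X.map (homOfLE (min_le_min (by omega : k ≤ k + 1)
            (Int.ofNat_le.mpr (le_refl j.down))))
          (X.map (homOfLE hm) (amb X x)) = amb X x
      rw [map_map, map_self]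
end
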